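/- The relation of DF/TT-provable equivalence is in general not transitive (hence not an equivalence relation), although it is always reflexive and symmetric: for every Γ and A, Γ ⊨_DF/TT A ↔ A; if Γ ⊨_DF/TT A ↔ B then Γ ⊨_DF/TT B ↔ A; but there exist a set of formulae Γ and formulae A, B, C such that Γ ⊨_DF/TT A ↔ B and Γ ⊨_DF/TT B ↔ C while Γ ⊭_DF/TT A ↔ C (a counterexample is witnessed by a DF-evaluation v, consistent with Γ, with v(A)=1, v(B)=½, v(C)=0). -/
import Mathlib


inductive Formula : Type
  | var : Nat → Formula
  | neg : Formula → Formula
  | conj : Formula → Formula → Formula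
  | disj : Formula → Formula → Formula
  | impl : Formula → Formula → Formula
deriving DecidableEq

inductive TV : Type
  | zero
  | half
  | one
deriving DecidableEq

/-- Strong Kleene negation: 0↦1, ½↦½, 1↦0. -/
def tneg : TV → TV
  | .zero => .one
  | .half => .half
  | .one => .zero

/-- min on {0,½,1}. -/
def tmin : TV → TV → TV
  | .zero, _ => .zero
  | .half, .zero => .zero
  | .half, .half => .half
  | .half, .one => .half
  | .one, b => b

/-- max on {0,½,1}. -/
def tmax : TV → TV → TV
  | .one, _ => .one
  | .half, .zero => .half
  | .half, .half => .half
  | .half, .one => .one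
  | .zero, b => b

/-- Designated values: ½ and 1. -/
def designated (x : TV) : Prop := x = TV.half ∨ x = TV.one

/-- The de Finetti conditional table: f_DF(x,y) = y if x = 1, and ½ if x ∈ {0,½}. -/
def fDF : TV → TV → TV
  | .one, b => b
  | .zero, _ => .half
  | .half, _ => .half

/-- A DF-evaluation. -/
def IsDFEval (v : Formula → TV) : Prop :=
  (∀ A, v (.neg A) = tneg (v A)) ∧
  (∀ A B, v (.conj A B) = tmin (v A) (v B)) ∧
  (∀ A B, v (.disj A B) = tmax (v A) (v B)) ∧
  (∀ A B, v (.impl A B) = fDF (v A) (v B))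

/-- TT-validity: Γ ⊨_DF/TT A. -/
def DFConsequence (Γ : Set Formula) (A : Formula) : Prop :=
  ∀ v : Formula → TV, IsDFEval v → (∀ B ∈ Γ, designated (v B)) → designated (v A)

/-- The biconditional A ↔ B := (A→B) ∧ (B→A). -/
def fiff (A B : Formula) : Formula := .conj (.impl A B) (.impl B A)


/-- Evaluation from a variable assignment. -/
def evalF (σ : Nat → TV) : Formula → TV
  | .var n => σ n
  | .neg A => tneg (evalF σ A)
  | .conj A B => tmin (evalF σ A) (evalF σ B)
  | .disj A B => tmax (evalF σ A) (evalF σ B)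
  | .impl A B => fDF (evalF σ A) (evalF σ B)

lemma evalF_isDFEval (σ : Nat → TV) : IsDFEval (evalF σ) :=
  ⟨fun _ => rfl, fun _ _ => rfl, fun _ _ => rfl, fun _ _ => rfl⟩

lemma fiff_val (v : Formula → TV) (hv : IsDFEval v) (A B : Formula) :
    v (fiff A B) = tmin (fDF (v A) (v B)) (fDF (v B) (v A)) := by
  rw [fiff, hv.2.1, hv.2.2.2, hv.2.2.2]

lemma des_fiff (a b : TV) : designated (tmin (fDF a b) (fDF b a)) ↔
    ¬ ((a = .one ∧ b = .zero) ∨ (a = .zero ∧ b = .one)) := by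
  cases a <;> cases b <;> simp [designated, fDF, tmin]

/-- DF/TT-provable equivalence is reflexive and symmetric but in general not
transitive: for every Γ and A, Γ ⊨_DF/TT A ↔ A; if Γ ⊨_DF/TT A ↔ B then
Γ ⊨_DF/TT B ↔ A; but there are Γ, A, B, C with Γ ⊨_DF/TT A ↔ B and Γ ⊨_DF/TT B ↔ C
while Γ ⊭_DF/TT A ↔ C, witnessed by a DF-evaluation v consistent with Γ such that
v(A) = 1, v(B) = ½, v(C) = 0. -/
theorem df_equiv_not_transitive :
    (∀ (Γ : Set Formula) (A : Formula), DFConsequence Γ (fiff A A)) ∧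
    (∀ (Γ : Set Formula) (A B : Formula),
      DFConsequence Γ (fiff A B) → DFConsequence Γ (fiff B A)) ∧
    (∃ (Γ : Set Formula) (A B C : Formula),
      DFConsequence Γ (fiff A B) ∧ DFConsequence Γ (fiff B C) ∧
      ¬ DFConsequence Γ (fiff A C) ∧
      ∃ v : Formula → TV, IsDFEval v ∧ (∀ G ∈ Γ, designated (v G)) ∧
        v A = TV.one ∧ v B = TV.half ∧ v C = TV.zero) := by
  refine ⟨?_, ?_, ?_⟩
  · intro Γ A v hv _
    rw [fiff_val v hv]
    rw [des_fiff]
    rintro (⟨h1, h2⟩ | ⟨h1, h2⟩) <;> simp_all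
  · intro Γ A B h v hv hΓ
    have := h v hv hΓ
    rw [fiff_val v hv] at this ⊢
    rw [des_fiff] at this ⊢
    tauto
  · refine ⟨∅, .var 0, .impl (.conj (.var 0) (.neg (.var 0))) (.var 0),
      .neg (.var 0), ?_, ?_, ?_, ?_⟩
    · intro v hv _
      rw [fiff_val v hv, des_fiff]; simp only [hv.1, hv.2.1, hv.2.2.2]
      cases h : v (.var 0) <;> simp [fDF, tmin, tneg, h]
    · intro v hv _
      rw [fiff_val v hv, des_fiff]; simp only [hv.1, hv.2.1, hv.2.2.2]
      cases h : v (.var 0) <;> simp [fDF, tmin, tneg, h]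
    · intro h
      have := h (evalF (fun _ => .one)) (evalF_isDFEval _) (by simp)
      rw [fiff_val _ (evalF_isDFEval _), des_fiff] at this
      exact this (Or.inl ⟨rfl, rfl⟩)
    · exact ⟨evalF (fun _ => .one), evalF_isDFEval _, by simp, rfl, rfl, rfl⟩
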